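/- Given a 3-CNF formula φ with variable set X, construct the encoding graph G(φ): for each clause C_j add a clause voter v_{C_j} and two dummy voters d_{C_j}, d'_{C_j}, with edges v_{C_j} → d_{C_j}, v_{C_j} → d'_{C_j}; add edge d_{C_j} → (first literal voter of C_j) and edges d'_{C_j} → (second and third literal voters of C_j); for each variable x add literal voters v_x, v_{¬x} with edges v_x → v_{¬x} and v_{¬x} → v_x. All voting costs are 1, delegating costs are 0. Then φ is satisfiable if and only if there is a feasible solution (C, D) with |C| ≤ |X| (total cost ≤ |X|) such that every vertex not in C has a D-path of length at most 2 to a vertex in C. -/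

import Mathlib

/-- Voters of the encoding of a 3-CNF formula with variables `X` and `n`
clauses: literal voters `lit x b`, clause voters `clause j`, and the two
clause-dummy voters `dum j false` (= d_{C_j}) and `dum j true` (= d'_{C_j}). -/
inductive Vtx (X : Type) (n : ℕ) where
  | lit : X → Bool → Vtx X n
  | clause : Fin n → Vtx X n
  | dum : Fin n → Bool → Vtx X n
deriving DecidableEq

/-- A 3-CNF formula over `X` with `n` clauses: each clause is a triple of
literals, a literal being a variable together with a polarity. -/
abbrev Cnf (X : Type) (n : ℕ) := Fin n → (X × Bool) × ((X × Bool) × (X × Bool))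

/-- A literal `(x, b)` is true under assignment `σ` iff `σ x = b`. -/
def litval {X : Type} (σ : X → Bool) (L : X × Bool) : Prop := σ L.1 = L.2

/-- Edges of the encoding graph: each clause voter points to its two dummies,
the first dummy points to the clause's first literal voter, the second dummy
points to the second and third literal voters, and complementary literal
voters point to each other. -/
inductive Edge {X : Type} {n : ℕ} (φ : Cnf X n) : Vtx X n → Vtx X n → Prop
  | cd (j : Fin n) (b : Bool) : Edge φ (.clause j) (.dum j b)
  | d1 (j : Fin n) : Edge φ (.dum j false) (.lit (φ j).1.1 (φ j).1.2)
  | d2 (j : Fin n) : Edge φ (.dum j true) (.lit (φ j).2.1.1 (φ j).2.1.2)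
  | d3 (j : Fin n) : Edge φ (.dum j true) (.lit (φ j).2.2.1 (φ j).2.2.2)
  | flip (x : X) (b : Bool) : Edge φ (.lit x b) (.lit x (!b))

/-- `reachLe Dn Cs ℓ a`: from `a` one reaches a vertex of `Cs` along selected
delegation edges in at most `ℓ` steps. -/
def reachLe {α : Type} [DecidableEq α] (Dn : α → Option α) (Cs : Finset α) :
    ℕ → α → Prop
  | 0, a => a ∈ Cs
  | ℓ + 1, a => a ∈ Cs ∨ ∃ b, Dn a = some b ∧ reachLe Dn Cs ℓ b

/-!
A satisfying assignment `σ` gives the casting set `{v_x^{σ x}}` of size `|X|`: a false literal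
delegates to its true complement, and a clause voter reaches a true literal of its clause through
the dummy guarding it. Conversely, literal voters only delegate to each other, so within two steps
each variable has a casting literal voter; the bound `|C| ≤ |X|` then forces `C` to be exactly one
literal voter per variable, i.e. an assignment, and the length-2 path from a clause voter must go
through one of its dummies to one of its literals, which is therefore true.
-/

theorem reachLe_two {α : Type} [DecidableEq α] (Dn : α → Option α) (Cs : Finset α) (a : α) :
    reachLe Dn Cs 2 a ↔
      a ∈ Cs ∨ ∃ b, Dn a = some b ∧ (b ∈ Cs ∨ ∃ c, Dn b = some c ∧ c ∈ Cs) := by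
  simp [reachLe]

instance {X : Type} (σ : X → Bool) (L : X × Bool) : Decidable (litval σ L) :=
  inferInstanceAs (Decidable (σ L.1 = L.2))

variable {X : Type} {n : ℕ}

def assignmentDelegation (φ : Cnf X n) (σ : X → Bool) : Vtx X n → Option (Vtx X n)
  | .lit x b => if σ x = b then none else some (.lit x !b)
  | .clause j => some (.dum j !decide (litval σ (φ j).1))
  | .dum j false => some (.lit (φ j).1.1 (φ j).1.2)
  | .dum j true =>
    if litval σ (φ j).2.1 then some (.lit (φ j).2.1.1 (φ j).2.1.2)
    else some (.lit (φ j).2.2.1 (φ j).2.2.2)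

theorem edge_of_assignmentDelegation_eq_some {φ : Cnf X n} {σ : X → Bool} {v w : Vtx X n}
    (h : assignmentDelegation φ σ v = some w) : Edge φ v w := by
  cases v with
  | lit x b =>
    by_cases hb : σ x = b <;>
      simp only [assignmentDelegation, hb, if_true, if_false, Option.some.injEq, reduceCtorEq] at h
    exact h ▸ .flip x b
  | clause j => cases h; exact .cd j _
  | dum j b =>
    cases b
    · cases h; exact .d1 j
    · by_cases h2 : litval σ (φ j).2.1 <;> simp only [assignmentDelegation, h2, if_true,
        if_false, Option.some.injEq] at h <;> subst h
      exacts [.d2 j, .d3 j]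

variable [DecidableEq X]

/-- Literal voters only delegate to literal voters of the same variable. -/
theorem exists_lit_mem_of_reachLe {φ : Cnf X n} {Dn : Vtx X n → Option (Vtx X n)}
    {C : Finset (Vtx X n)} (hedge : ∀ i j, Dn i = some j → Edge φ i j) :
    ∀ (ℓ : ℕ) (x : X) (b : Bool), reachLe Dn C ℓ (.lit x b) → ∃ b', Vtx.lit x b' ∈ C
  | 0, _, b, h => ⟨b, h⟩
  | ℓ + 1, x, b, h => by
    rcases h with h | ⟨w, hw, hw'⟩
    · exact ⟨b, h⟩
    · cases hedge _ _ hw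
      exact exists_lit_mem_of_reachLe hedge ℓ x _ hw'

variable [Fintype X]

def assignmentVoters (σ : X → Bool) : Finset (Vtx X n) :=
  Finset.univ.image fun x => .lit x (σ x)

@[simp]
theorem lit_mem_assignmentVoters {σ : X → Bool} {x : X} {b : Bool} :
    (Vtx.lit x b : Vtx X n) ∈ assignmentVoters σ ↔ σ x = b := by
  simp [assignmentVoters, eq_comm]

@[simp]
theorem clause_not_mem_assignmentVoters (σ : X → Bool) (j : Fin n) :
    Vtx.clause j ∉ assignmentVoters σ := by
  simp [assignmentVoters]

@[simp]
theorem dum_not_mem_assignmentVoters (σ : X → Bool) (j : Fin n) (b : Bool) :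
    Vtx.dum j b ∉ assignmentVoters σ := by
  simp [assignmentVoters]

theorem card_assignmentVoters (σ : X → Bool) :
    (assignmentVoters σ : Finset (Vtx X n)).card = Fintype.card X :=
  Finset.card_image_of_injective _ fun x y h => by injection h

theorem exists_eq_assignmentVoters {C : Finset (Vtx X n)} (hlit : ∀ x, ∃ b, Vtx.lit x b ∈ C)
    (hcard : C.card ≤ Fintype.card X) : ∃ σ : X → Bool, C = assignmentVoters σ := by
  choose σ hσ using hlit
  refine ⟨σ, (Finset.eq_of_subset_of_card_le ?_ ?_).symm⟩
  · simp only [assignmentVoters, Finset.image_subset_iff, Finset.mem_univ, forall_const]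
    exact hσ
  · rwa [card_assignmentVoters]

theorem assignmentDelegation_eq_none_iff (φ : Cnf X n) (σ : X → Bool) (v : Vtx X n) :
    assignmentDelegation φ σ v = none ↔ v ∈ assignmentVoters σ := by
  cases v with
  | lit x b => by_cases hb : σ x = b <;> simp [assignmentDelegation, hb]
  | clause j => simp [assignmentDelegation]
  | dum j b =>
    cases b
    · simp [assignmentDelegation]
    · by_cases h2 : litval σ (φ j).2.1 <;> simp [assignmentDelegation, h2]

theorem reachLe_assignmentDelegation_lit (φ : Cnf X n) (σ : X → Bool) (L : X × Bool) :
    reachLe (assignmentDelegation φ σ) (assignmentVoters σ) 1 (.lit L.1 L.2) := by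
  by_cases hL : σ L.1 = L.2
  · exact Or.inl (lit_mem_assignmentVoters.2 hL)
  · refine Or.inr ⟨.lit L.1 !L.2, by simp [assignmentDelegation, hL], ?_⟩
    simp only [reachLe, lit_mem_assignmentVoters]
    cases h : σ L.1 <;> cases hb : L.2 <;> simp_all

theorem reachLe_assignmentDelegation {φ : Cnf X n} {σ : X → Bool}
    (hσ : ∀ j, litval σ (φ j).1 ∨ litval σ (φ j).2.1 ∨ litval σ (φ j).2.2) (v : Vtx X n) :
    reachLe (assignmentDelegation φ σ) (assignmentVoters σ) 2 v := by
  have hlit := reachLe_assignmentDelegation_lit φ σ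
  rw [reachLe_two]
  cases v with
  | lit x b =>
    rcases hlit (x, b) with h | ⟨w, hw, hwC⟩
    exacts [Or.inl h, Or.inr ⟨w, hw, Or.inl hwC⟩]
  | dum j b =>
    cases b
    · exact Or.inr ⟨_, rfl, hlit (φ j).1⟩
    · by_cases h2 : litval σ (φ j).2.1
      · exact Or.inr ⟨_, by simp [assignmentDelegation, h2], hlit (φ j).2.1⟩
      · exact Or.inr ⟨_, by simp [assignmentDelegation, h2], hlit (φ j).2.2⟩
  | clause j =>
    refine Or.inr ⟨_, rfl, Or.inr ?_⟩
    by_cases h1 : litval σ (φ j).1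
    · exact ⟨_, by simp [assignmentDelegation, h1], lit_mem_assignmentVoters.2 h1⟩
    by_cases h2 : litval σ (φ j).2.1
    · exact ⟨_, by simp [assignmentDelegation, h1, h2], lit_mem_assignmentVoters.2 h2⟩
    have h3 : litval σ (φ j).2.2 := (hσ j).resolve_left h1 |>.resolve_left h2
    exact ⟨_, by simp [assignmentDelegation, h1, h2], lit_mem_assignmentVoters.2 h3⟩

theorem clause_satisfied_of_reachLe {φ : Cnf X n} {σ : X → Bool}
    {Dn : Vtx X n → Option (Vtx X n)} (hedge : ∀ i j, Dn i = some j → Edge φ i j) (j : Fin n)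
    (hj : reachLe Dn (assignmentVoters σ) 2 (.clause j)) :
    litval σ (φ j).1 ∨ litval σ (φ j).2.1 ∨ litval σ (φ j).2.2 := by
  obtain h | ⟨w, hw, h | ⟨u, hu, huC⟩⟩ := (reachLe_two _ _ _).1 hj
  · exact absurd h (clause_not_mem_assignmentVoters σ j)
  · cases hedge _ _ hw
    exact absurd h (dum_not_mem_assignmentVoters σ j _)
  · cases hedge _ _ hw
    cases hedge _ _ hu
    exacts [.inl (lit_mem_assignmentVoters.1 huC), .inr (.inl (lit_mem_assignmentVoters.1 huC)),
      .inr (.inr (lit_mem_assignmentVoters.1 huC))]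

/-- A 3-CNF formula `φ` is satisfiable iff its encoding admits a feasible
solution of cost at most `|X|` (all voting costs are 1 and delegating costs 0,
so the cost is `|C|`) in which every non-casting voter has a delegation path of
length at most 2 to a casting voter. -/
theorem sat_iff_bounded_max_length {X : Type} [Fintype X] [DecidableEq X] {n : ℕ}
    (φ : Cnf X n) :
    (∃ σ : X → Bool, ∀ j : Fin n,
      litval σ (φ j).1 ∨ litval σ (φ j).2.1 ∨ litval σ (φ j).2.2) ↔
    (∃ (C : Finset (Vtx X n)) (Dn : Vtx X n → Option (Vtx X n)),
      (∀ i, Dn i = none ↔ i ∈ C) ∧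
      (∀ i j, Dn i = some j → Edge φ i j) ∧
      (∀ i : Vtx X n, reachLe Dn C 2 i) ∧
      C.card ≤ Fintype.card X) := by
  constructor
  · rintro ⟨σ, hσ⟩
    exact ⟨assignmentVoters σ, assignmentDelegation φ σ, assignmentDelegation_eq_none_iff φ σ,
      fun _ _ => edge_of_assignmentDelegation_eq_some, reachLe_assignmentDelegation hσ,
      (card_assignmentVoters σ).le⟩
  · rintro ⟨C, Dn, -, hedge, hreach, hcard⟩
    obtain ⟨σ, rfl⟩ := exists_eq_assignmentVoters
      (fun x => exists_lit_mem_of_reachLe hedge 2 x true (hreach _)) hcard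
    exact ⟨σ, fun j => clause_satisfied_of_reachLe hedge j (hreach _)⟩
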